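/- Fix an integer r ≥ 0 and set n = 2 + r. For α = 0, …, r let V_α be the n×2 matrix with entries (V_α)_{q,p} = 1 if q = p + α and 0 otherwise (p ∈ {1,2}, 1 ≤ q ≤ n). For a real number a, define Φ_a : M_2(ℂ) → M_n(ℂ) by Φ_a(X) = a·Tr(X)·I_n − ∑_{α=0}^{r} V_α X V_αᴴ. Then Φ_a is positive (Φ_a(A) is positive semidefinite for every positive semidefinite A ∈ M_2(ℂ)) if and only if a ≥ 1 + cos(π/(r+2)). -/

import Mathlib

/-!
With `y_α = (w_α, w_{α+1})`, the quadratic form of `Φ_a(A)` at `w` is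
`a · Tr A · ‖w‖² - ∑_α y_αᴴ A y_α`. Writing `A = BᴴB` reduces everything to one row `(b, c)` of `B`,
that is, to bounding `‖T w‖²` for the bidiagonal map `(T w)_α = b w_α + c w_{α+1}`.
After passing to absolute values, `T Tᵀ` is `|b|² + |c|²` plus `|b||c|` times the adjacency matrix
of the path with `r + 1` vertices. That adjacency matrix has top eigenvalue `2 cos (π / (r + 2))`,
which follows from a weighted AM-GM with weights `sin (k π / (r + 2))`. Since `TᵀT` and `TTᵀ` have
the same norm, we get `‖T w‖² ≤ (1 + cos (π / (r + 2))) (|b|² + |c|²) ‖w‖²`.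
Equality holds for `b = c = 1` and `w_q = sin ((q + 1/2) π / (r + 2))`, which gives the converse.
-/

open Matrix Finset Real
open scoped ComplexOrder

theorem sum_cos_two_pi_mul_add_div {n : ℕ} (hn : 2 ≤ n) (c : ℝ) :
    ∑ k ∈ range n, cos (2 * π * (k + c) / n) = 0 := by
  have hζ := Complex.isPrimitiveRoot_exp n (by omega)
  have hterm (k : ℕ) : Complex.exp ((2 * π * (k + c) / n : ℝ) * Complex.I)
      = Complex.exp ((2 * π * c / n : ℝ) * Complex.I)
        * Complex.exp (2 * π * Complex.I / n) ^ k := by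
    rw [← Complex.exp_nat_mul, ← Complex.exp_add]
    congr 1
    push_cast
    ring
  simp_rw [← Complex.exp_ofReal_mul_I_re, ← Complex.re_sum, hterm, ← mul_sum,
    hζ.geom_sum_eq_zero (by omega), mul_zero, Complex.zero_re]

theorem sum_sin_sq_pi_mul_add_div {n : ℕ} (hn : 2 ≤ n) (c : ℝ) :
    ∑ k ∈ range n, sin (π * (k + c) / n) ^ 2 = n / 2 := by
  have hterm (k : ℕ) : sin (π * (k + c) / n) ^ 2 = 1 / 2 - 1 / 2 * cos (2 * π * (k + c) / n) := by
    rw [sin_sq_eq_half_sub]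
    ring_nf
  rw [sum_congr rfl fun k _ => hterm k, sum_sub_distrib, ← mul_sum,
    sum_cos_two_pi_mul_add_div hn c, mul_zero, sub_zero, sum_const, card_range, nsmul_eq_mul]
  ring

theorem sum_sq_sin_add_sin_succ (r : ℕ) :
    ∑ k ∈ range (r + 1), (sin (π * (k + 1 / 2) / (r + 2)) + sin (π * (k + 1 + 1 / 2) / (r + 2))) ^ 2
      = (r + 2) * (1 + cos (π / (r + 2))) := by
  have hr : (r : ℝ) + 2 ≠ 0 := by positivity
  have hterm (k : ℕ) : (sin (π * (k + 1 / 2) / (r + 2)) + sin (π * (k + 1 + 1 / 2) / (r + 2))) ^ 2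
      = 2 * (1 + cos (π / (r + 2))) * sin (π * (k + 1) / (r + 2)) ^ 2 := by
    rw [add_comm, sin_add_sin, mul_pow, mul_pow, cos_sq]
    ring_nf
  have hlast : π * (r + 1 + 1) / (r + 2) = π := by field_simp; ring
  have hsum := sum_sin_sq_pi_mul_add_div (n := r + 2) (by omega) 1
  rw [sum_range_succ] at hsum
  push_cast at hsum
  rw [hlast, sin_pi, zero_pow two_ne_zero, add_zero] at hsum
  rw [sum_congr rfl fun k _ => hterm k, ← mul_sum, hsum]
  ring

theorem sum_mul_succ_le_of_recurrence {N : ℕ} {s : ℕ → ℝ} {μ : ℝ} (hs0 : s 0 = 0)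
    (hsN : s (N + 2) = 0) (hpos : ∀ k ≤ N, 0 < s (k + 1))
    (hrec : ∀ k ≤ N, s (k + 2) + s k = 2 * μ * s (k + 1)) (x : ℕ → ℝ) :
    ∑ i ∈ range N, x i * x (i + 1) ≤ μ * ∑ i ∈ range (N + 1), x i ^ 2 := by
  set f : ℕ → ℝ := fun i => s (i + 2) / s (i + 1) * x i ^ 2
  set g : ℕ → ℝ := fun i => s i / s (i + 1) * x i ^ 2
  have hamgm : ∀ i ∈ range N, 2 * (x i * x (i + 1)) ≤ f i + g (i + 1) := by
    intro i hi
    rw [mem_range] at hi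
    have hp := hpos i hi.le
    have hq := hpos (i + 1) hi
    simp only [f, g]
    rw [div_mul_eq_mul_div, div_mul_eq_mul_div, div_add_div _ _ hp.ne' hq.ne',
      le_div_iff₀ (by positivity)]
    nlinarith [sq_nonneg (s (i + 2) * x i - s (i + 1) * x (i + 1))]
  have htelescope : ∑ i ∈ range N, (f i + g (i + 1)) = ∑ i ∈ range (N + 1), (f i + g i) := by
    rw [sum_add_distrib, sum_add_distrib, sum_range_succ f, sum_range_succ' g]
    simp [f, g, hs0, hsN]
  have hdiag : ∀ i ∈ range (N + 1), f i + g i = 2 * μ * x i ^ 2 := by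
    intro i hi
    rw [mem_range, Nat.lt_succ_iff] at hi
    have hp := hpos i hi
    simp only [f, g]
    rw [← add_mul, ← add_div, hrec i hi]
    field_simp
  have := (sum_le_sum hamgm).trans_eq (htelescope.trans (sum_congr rfl hdiag))
  rw [← mul_sum, ← mul_sum] at this
  linarith

theorem sum_mul_succ_le_cos_mul_sum_sq (N : ℕ) (x : ℕ → ℝ) :
    ∑ i ∈ range N, x i * x (i + 1) ≤ cos (π / (N + 2)) * ∑ i ∈ range (N + 1), x i ^ 2 := by
  have hN : (0 : ℝ) < N + 2 := by positivity
  refine sum_mul_succ_le_of_recurrence (s := fun k => sin (k * (π / (N + 2)))) (by simp)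
    ?_ (fun k hk => ?_) (fun k _ => ?_) x
  · push_cast
    rw [mul_div_cancel₀ _ hN.ne', sin_pi]
  · apply sin_pos_of_pos_of_lt_pi (by positivity)
    rw [← lt_div_iff₀ (by positivity), div_div_cancel₀ pi_ne_zero]
    push_cast
    linarith [show (k : ℝ) ≤ N from by exact_mod_cast hk]
  · push_cast
    rw [sin_add_sin]
    ring_nf

theorem sum_sq_add_mul_succ_le {r : ℕ} {μ β γ : ℝ} (hμ : 0 ≤ μ) (hβ : 0 ≤ β) (hγ : 0 ≤ γ)
    (hchain : ∀ z : ℕ → ℝ, ∑ i ∈ range r, z i * z (i + 1) ≤ μ * ∑ i ∈ range (r + 1), z i ^ 2)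
    (x : ℕ → ℝ) :
    ∑ α ∈ range (r + 1), (β * x α + γ * x (α + 1)) ^ 2
      ≤ (1 + μ) * (β ^ 2 + γ ^ 2) * ∑ q ∈ range (r + 2), x q ^ 2 := by
  set s : ℕ → ℝ := fun α => β * x α + γ * x (α + 1)
  set S := ∑ α ∈ range (r + 1), s α ^ 2
  -- `s = T x` for a bidiagonal `T`; `u = Tᵀ s` is computed with `s` padded by zeros on both sides
  set z : ℕ → ℝ := fun k => if k ≤ r then s k else 0
  set zm : ℕ → ℝ := fun | 0 => 0 | k + 1 => z k
  set u : ℕ → ℝ := fun q => β * z q + γ * zm q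
  have hz : ∀ k ∈ range (r + 1), z k = s k :=
    fun k hk => if_pos (Nat.lt_succ_iff.1 (mem_range.1 hk))
  have hz_last : z (r + 1) = 0 := if_neg (by omega)
  have hzS : ∑ k ∈ range (r + 2), z k ^ 2 = S := by
    rw [sum_range_succ, hz_last]
    simpa using sum_congr rfl fun k hk => by rw [hz k hk]
  have hzmS : ∑ k ∈ range (r + 2), zm k ^ 2 = S := by
    rw [sum_range_succ', ← hzS, sum_range_succ _ (r + 1), hz_last]
  have hdual : S = ∑ q ∈ range (r + 2), x q * u q := by
    simp only [u, mul_add, sum_add_distrib]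
    rw [sum_range_succ, sum_range_succ' (fun q => x q * (γ * zm q))]
    simp only [hz_last, zm, mul_zero, add_zero]
    rw [← sum_add_distrib]
    refine sum_congr rfl fun k hk => ?_
    rw [hz k hk]
    ring
  have hcross : ∑ q ∈ range (r + 2), z q * zm q ≤ μ * S := by
    rw [sum_range_succ', sum_range_succ]
    simpa [zm, hz_last, mul_comm, ← hzS, sum_range_succ _ (r + 1)] using hchain z
  have hS : 0 ≤ S := sum_nonneg fun _ _ => sq_nonneg _
  have hadj : ∑ q ∈ range (r + 2), u q ^ 2 ≤ (1 + μ) * (β ^ 2 + γ ^ 2) * S := by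
    have hsq : ∀ q, u q ^ 2 = β ^ 2 * z q ^ 2 + γ ^ 2 * zm q ^ 2 + 2 * β * γ * (z q * zm q) :=
      fun q => by ring
    simp only [hsq, sum_add_distrib, ← mul_sum, hzS, hzmS]
    nlinarith [mul_le_mul_of_nonneg_left hcross (by positivity : 0 ≤ 2 * β * γ),
      mul_nonneg (mul_nonneg hμ hS) (sq_nonneg (β - γ))]
  have hcs := sum_mul_sq_le_sq_mul_sq (range (r + 2)) x u
  rw [← hdual] at hcs
  have hX : 0 ≤ ∑ q ∈ range (r + 2), x q ^ 2 := sum_nonneg fun _ _ => sq_nonneg _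
  have hK : 0 ≤ (1 + μ) * (β ^ 2 + γ ^ 2) := by positivity
  nlinarith [mul_le_mul_of_nonneg_left hadj hX, mul_nonneg hK hX]

theorem sum_norm_sq_add_mul_succ_le {R : Type*} [NormedRing R] (r : ℕ) (b c : R) (W : ℕ → R) :
    ∑ α ∈ range (r + 1), ‖b * W α + c * W (α + 1)‖ ^ 2
      ≤ (1 + cos (π / (r + 2))) * (‖b‖ ^ 2 + ‖c‖ ^ 2) * ∑ q ∈ range (r + 2), ‖W q‖ ^ 2 := by
  have hcos : 0 ≤ cos (π / (r + 2)) := by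
    refine cos_nonneg_of_mem_Icc ⟨by linarith [pi_pos, (by positivity : 0 ≤ π / (r + 2))], ?_⟩
    exact div_le_div_of_nonneg_left pi_pos.le two_pos (by linarith [(r.cast_nonneg : (0 : ℝ) ≤ r)])
  calc _ ≤ ∑ α ∈ range (r + 1), (‖b‖ * ‖W α‖ + ‖c‖ * ‖W (α + 1)‖) ^ 2 := by
        gcongr with α
        exact (norm_add_le _ _).trans (add_le_add (norm_mul_le _ _) (norm_mul_le _ _))
    _ ≤ _ := sum_sq_add_mul_succ_le hcos (norm_nonneg b) (norm_nonneg c)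
        (sum_mul_succ_le_cos_mul_sum_sq r) _

theorem star_dotProduct_mul_mul_conjTranspose_mulVec {R m n : Type*} [CommSemiring R] [StarRing R]
    [Fintype m] [Fintype n] (M : Matrix m n R) (N : Matrix n n R) (x : m → R) :
    star x ⬝ᵥ (M * N * Mᴴ) *ᵥ x = star (Mᴴ *ᵥ x) ⬝ᵥ N *ᵥ (Mᴴ *ᵥ x) := by
  rw [← mulVec_mulVec, ← mulVec_mulVec, dotProduct_mulVec, star_mulVec,
    conjTranspose_conjTranspose]

theorem star_dotProduct_self_eq_ofReal {n : Type*} [Fintype n] (v : n → ℂ) :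
    star v ⬝ᵥ v = ((∑ i, ‖v i‖ ^ 2 : ℝ) : ℂ) := by
  simp [dotProduct, Complex.conj_mul']

theorem trace_conjTranspose_mul_self_eq_ofReal {m n : Type*} [Fintype m] [Fintype n]
    (B : Matrix m n ℂ) : (Bᴴ * B).trace = ((∑ i, ∑ j, ‖B i j‖ ^ 2 : ℝ) : ℂ) := by
  rw [sum_comm]
  simp [trace, mul_apply, Complex.conj_mul']

theorem star_dotProduct_conjTranspose_mul_self_mulVec {m n : Type*} [Fintype m] [Fintype n]
    (B : Matrix m n ℂ) (y : n → ℂ) :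
    star y ⬝ᵥ (Bᴴ * B) *ᵥ y = ((∑ i, ‖(B *ᵥ y) i‖ ^ 2 : ℝ) : ℂ) := by
  rw [← mulVec_mulVec, dotProduct_mulVec, vecMul_conjTranspose, star_star,
    star_dotProduct_self_eq_ofReal]

def shiftEmbedding (r : ℕ) (α : Fin (r + 1)) : Matrix (Fin (2 + r)) (Fin 2) ℂ :=
  Matrix.of fun (q : Fin (2 + r)) (p : Fin 2) => if (q : ℕ) = (p : ℕ) + (α : ℕ) then 1 else 0

def shiftMap (r : ℕ) (a : ℝ) (X : Matrix (Fin 2) (Fin 2) ℂ) :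
    Matrix (Fin (2 + r)) (Fin (2 + r)) ℂ :=
  (a : ℂ) • X.trace • 1 - ∑ α, shiftEmbedding r α * X * (shiftEmbedding r α)ᴴ

-- vectors on `Fin (2 + r)` are handled through functions on `ℕ`, so that windows are shifts
theorem conjTranspose_shiftEmbedding_mulVec {r : ℕ} (α : Fin (r + 1)) (W : ℕ → ℂ) :
    (shiftEmbedding r α)ᴴ *ᵥ (fun q : Fin (2 + r) => W q) = ![W α, W (α + 1)] := by
  have hsum : ∀ k < 2 + r, (∑ q : Fin (2 + r), if (q : ℕ) = k then W q else 0) = W k :=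
    fun k hk => by
      rw [Fin.sum_univ_eq_sum_range (fun q => if q = k then W q else 0), sum_ite_eq']
      simp [hk]
  ext p
  fin_cases p
  · simpa [shiftEmbedding, mulVec, dotProduct] using hsum α (by omega)
  · simpa [shiftEmbedding, mulVec, dotProduct, add_comm] using hsum (α + 1) (by omega)

theorem isHermitian_shiftMap {r : ℕ} (a : ℝ) {X : Matrix (Fin 2) (Fin 2) ℂ}
    (hX : X.IsHermitian) : (shiftMap r a X).IsHermitian := by
  refine IsHermitian.sub (isHermitian_one.smul ?_ |>.smul ?_) ?_
  · rw [IsSelfAdjoint, ← trace_conjTranspose, hX.eq]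
  · exact Complex.conj_ofReal a
  · exact isSelfAdjoint_sum _ fun α _ => isHermitian_mul_mul_conjTranspose _ hX

theorem star_dotProduct_shiftMap_mulVec {m : Type*} [Fintype m] (r : ℕ) (a : ℝ)
    (B : Matrix m (Fin 2) ℂ) (W : ℕ → ℂ) :
    star (fun q : Fin (2 + r) => W q) ⬝ᵥ shiftMap r a (Bᴴ * B) *ᵥ (fun q : Fin (2 + r) => W q)
      = ((a * (∑ i, ∑ j, ‖B i j‖ ^ 2) * ∑ q ∈ range (r + 2), ‖W q‖ ^ 2
          - ∑ α ∈ range (r + 1), ∑ i, ‖B i 0 * W α + B i 1 * W (α + 1)‖ ^ 2 : ℝ) : ℂ) := by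
  simp only [shiftMap, sub_mulVec, dotProduct_sub, smul_mulVec, one_mulVec, dotProduct_smul,
    sum_mulVec, dotProduct_sum, star_dotProduct_mul_mul_conjTranspose_mulVec,
    conjTranspose_shiftEmbedding_mulVec, star_dotProduct_conjTranspose_mul_self_mulVec,
    trace_conjTranspose_mul_self_eq_ofReal, star_dotProduct_self_eq_ofReal]
  have hW : ∑ q : Fin (2 + r), ‖W q‖ ^ 2 = ∑ q ∈ range (r + 2), ‖W q‖ ^ 2 := by
    rw [Fin.sum_univ_eq_sum_range (fun q => ‖W q‖ ^ 2), add_comm]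
  rw [hW, ← Complex.ofReal_sum,
    Fin.sum_univ_eq_sum_range (fun α => ∑ i, ‖(B *ᵥ ![W α, W (α + 1)]) i‖ ^ 2)]
  simp [mulVec, dotProduct, Fin.sum_univ_two, mul_assoc]

theorem posSemidef_shiftMap {r : ℕ} {a : ℝ} (ha : 1 + cos (π / (r + 2)) ≤ a)
    {A : Matrix (Fin 2) (Fin 2) ℂ} (hA : A.PosSemidef) : (shiftMap r a A).PosSemidef := by
  obtain ⟨B, rfl⟩ : ∃ B : Matrix (Fin 2) (Fin 2) ℂ, A = Bᴴ * B := by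
    open scoped MatrixOrder in
    exact CStarAlgebra.nonneg_iff_eq_star_mul_self.mp (Matrix.nonneg_iff_posSemidef.mpr hA)
  refine .of_dotProduct_mulVec_nonneg (isHermitian_shiftMap a hA.isHermitian) fun w => ?_
  obtain ⟨W, rfl⟩ : ∃ W : ℕ → ℂ, w = fun q : Fin (2 + r) => W q :=
    ⟨fun q => if h : q < 2 + r then w ⟨q, h⟩ else 0, by simp⟩
  rw [star_dotProduct_shiftMap_mulVec, Complex.zero_le_real, sub_nonneg]
  calc _ = ∑ i, ∑ α ∈ range (r + 1), ‖B i 0 * W α + B i 1 * W (α + 1)‖ ^ 2 := sum_comm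
    _ ≤ ∑ i, (1 + cos (π / (r + 2))) * (∑ j, ‖B i j‖ ^ 2) * ∑ q ∈ range (r + 2), ‖W q‖ ^ 2 := by
        gcongr with i
        simpa [Fin.sum_univ_two] using sum_norm_sq_add_mul_succ_le r (B i 0) (B i 1) W
    _ ≤ _ := by
        rw [← sum_mul, ← mul_sum]
        gcongr

theorem le_of_forall_posSemidef_shiftMap {r : ℕ} {a : ℝ}
    (hpos : ∀ A : Matrix (Fin 2) (Fin 2) ℂ, A.PosSemidef → (shiftMap r a A).PosSemidef) :
    1 + cos (π / (r + 2)) ≤ a := by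
  -- test `A = !![1, 1; 1, 1]` against the top eigenvector of the signless Laplacian of the path
  set B : Matrix (Fin 2) (Fin 2) ℂ := !![1, 1; 0, 0]
  set f : ℕ → ℝ := fun k => sin (π * (k + 1 / 2) / (r + 2))
  have h := (hpos _ (posSemidef_conjTranspose_mul_self B)).dotProduct_mulVec_nonneg
    (fun q : Fin (2 + r) => (f q : ℂ))
  rw [star_dotProduct_shiftMap_mulVec r a B (fun k => (f k : ℂ)), Complex.zero_le_real] at h
  have hB : ∑ i, ∑ j, ‖B i j‖ ^ 2 = 2 := by norm_num [B, Fin.sum_univ_two]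
  have hrow (α : ℕ) : ∑ i, ‖B i 0 * f α + B i 1 * f (α + 1)‖ ^ 2 = (f α + f (α + 1)) ^ 2 := by
    simp [B, Fin.sum_univ_two, ← Complex.ofReal_add, Complex.norm_real]
  have hnorm : ∑ q ∈ range (r + 2), f q ^ 2 = (r + 2) / 2 := by
    simpa [f] using sum_sin_sq_pi_mul_add_div (n := r + 2) (by omega) (1 / 2)
  have hpair : ∑ α ∈ range (r + 1), (f α + f (α + 1)) ^ 2 = (r + 2) * (1 + cos (π / (r + 2))) := by
    simpa [f, add_assoc] using sum_sq_sin_add_sin_succ r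
  simp only [hB, hrow, Complex.norm_real, Real.norm_eq_abs, sq_abs, hnorm, hpair] at h
  nlinarith [(by positivity : (0 : ℝ) < r + 2)]

theorem stmt_17 (r : ℕ) (a : ℝ)
    (Φ : Matrix (Fin 2) (Fin 2) ℂ → Matrix (Fin (2 + r)) (Fin (2 + r)) ℂ)
    (hΦ : ∀ X, Φ X = (a : ℂ) • Matrix.trace X • (1 : Matrix (Fin (2 + r)) (Fin (2 + r)) ℂ)
      - ∑ α : Fin (r + 1),
          ((Matrix.of fun (q : Fin (2 + r)) (p : Fin 2) =>
              if (q : ℕ) = (p : ℕ) + (α : ℕ) then (1 : ℂ) else 0) * X *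
            (Matrix.of fun (q : Fin (2 + r)) (p : Fin 2) =>
              if (q : ℕ) = (p : ℕ) + (α : ℕ) then (1 : ℂ) else 0)ᴴ)) :
    (∀ A : Matrix (Fin 2) (Fin 2) ℂ, A.PosSemidef → (Φ A).PosSemidef) ↔
      1 + Real.cos (Real.pi / (r + 2)) ≤ a := by
  obtain rfl : Φ = shiftMap r a := funext hΦ
  exact ⟨le_of_forall_posSemidef_shiftMap, fun ha _ hA => posSemidef_shiftMap ha hA⟩
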